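/- arXiv:math/9901025 — 4 statements merged into one kernel-verified Lean document; each statement's English description precedes it below -/
import Mathlib

section
/- For Im(τ) = t > 0, integer k > 0, u = u₁ + τu₂ ∈ ℂ, and a ∈ ℤ, the squared norm of the theta function θ_{a/k}(kx+u, kτ) as a section of L(k,u) equals (1/√(2tk)) · exp(2πtu₂²/k). That is, ∫_{ℂ/(ℤ+ℤτ)} |θ_{a/k}(kx+u,kτ)|² exp(-2πt(kx₂² + 2x₂u₂)) dx₁dx₂ = (2tk)^{-1/2} exp(2πtu₂²/k). -/
open Complex Real MeasureTheory
open scoped ComplexConjugate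

lemma summable_exp_quad {c : ℝ} (hc : 0 < c) (b ρ : ℝ) :
    Summable (fun n : ℤ => Real.exp (-c * ((n : ℝ) + ρ)^2 + b * ((n : ℝ) + ρ))) := by
  have hcπ : 0 < c / π := div_pos hc Real.pi_pos
  have h := (summable_pow_mul_jacobiTheta₂_term_bound (|b - 2*c*ρ|/(2*π)) hcπ 0).mul_left
      (Real.exp (b*ρ - c*ρ^2))
  refine h.of_nonneg_of_le (fun n => (Real.exp_pos _).le) (fun n => ?_)
  rw [pow_zero, one_mul, ← Real.exp_add, Real.exp_le_exp, Int.cast_abs]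
  have h2 : (b*ρ - c*ρ^2) + -π * (c/π * (n:ℝ)^2 - 2 * (|b - 2*c*ρ|/(2*π)) * |(n:ℝ)|)
      = (b*ρ - c*ρ^2) + (-c * (n:ℝ)^2 + |b - 2*c*ρ| * |(n:ℝ)|) := by
    field_simp
    ring
  rw [h2]
  have h3 : -c * ((n:ℝ) + ρ)^2 + b * ((n:ℝ) + ρ)
      = (b*ρ - c*ρ^2) + (-c * (n:ℝ)^2 + (b - 2*c*ρ) * (n:ℝ)) := by ring
  rw [h3]
  have h4 : (b - 2*c*ρ) * (n:ℝ) ≤ |b - 2*c*ρ| * |(n:ℝ)| :=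
    le_trans (le_abs_self _) (le_of_eq (abs_mul _ _))
  linarith

lemma gauss_int {c : ℝ} (hc : 0 < c) (b : ℝ) :
    ∫ y : ℝ, Real.exp (-(c * y^2 + b * y)) = Real.sqrt (π/c) * Real.exp (b^2/(4*c)) := by
  have h1 : ∀ y : ℝ, -(c*y^2 + b*y) = -c*(y + b/(2*c))^2 + b^2/(4*c) := by
    intro y; field_simp; ring
  simp_rw [h1, Real.exp_add, integral_mul_const]
  rw [integral_add_right_eq_self (fun y => Real.exp (-c * y^2)) (b/(2*c)), integral_gaussian]

lemma integrable_gauss {c : ℝ} (hc : 0 < c) (b : ℝ) :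
    Integrable (fun y : ℝ => Real.exp (-(c * y^2 + b * y))) := by
  have h1 : ∀ y : ℝ, -(c*y^2 + b*y) = -c*(y + b/(2*c))^2 + b^2/(4*c) := by
    intro y; field_simp; ring
  simp_rw [h1, Real.exp_add]
  exact (((integrable_exp_neg_mul_sq hc).comp_add_right (b/(2*c)))).mul_const _

lemma tiling {g : ℝ → ℝ} (hg : Integrable g) (ρ : ℝ) :
    ∑' n : ℤ, ∫ x in Set.Icc (0:ℝ) 1, g (x + ((n:ℝ) + ρ)) = ∫ y : ℝ, g y := by
  have h1 : ∀ n : ℤ, ∫ x in Set.Icc (0:ℝ) 1, g (x + ((n:ℝ) + ρ))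
      = ∫ y in Set.Ioc (ρ + (n:ℝ)) (ρ + (n:ℝ) + 1), g y := by
    intro n
    rw [integral_Icc_eq_integral_Ioc,
      ← intervalIntegral.integral_of_le (by norm_num : (0:ℝ) ≤ 1),
      intervalIntegral.integral_comp_add_right g ((n:ℝ) + ρ),
      intervalIntegral.integral_of_le (by linarith : (0:ℝ) + ((n:ℝ)+ρ) ≤ 1 + ((n:ℝ)+ρ))]
    congr 1 <;> ring
  simp_rw [h1]
  rw [← integral_iUnion (fun n : ℤ => measurableSet_Ioc)
    (Set.pairwise_disjoint_Ioc_add_intCast ρ)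
    (hg.integrableOn), iUnion_Ioc_add_intCast, Measure.restrict_univ]

lemma hassum_tiling {g : ℝ → ℝ} (hg : Integrable g) (ρ : ℝ) :
    Summable (fun n : ℤ => ∫ x in Set.Icc (0:ℝ) 1, g (x + ((n:ℝ) + ρ))) := by
  have h1 : ∀ n : ℤ, ∫ x in Set.Icc (0:ℝ) 1, g (x + ((n:ℝ) + ρ))
      = ∫ y in Set.Ioc (ρ + (n:ℝ)) (ρ + (n:ℝ) + 1), g y := by
    intro n
    rw [integral_Icc_eq_integral_Ioc,
      ← intervalIntegral.integral_of_le (by norm_num : (0:ℝ) ≤ 1),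
      intervalIntegral.integral_comp_add_right g ((n:ℝ) + ρ),
      intervalIntegral.integral_of_le (by linarith : (0:ℝ) + ((n:ℝ)+ρ) ≤ 1 + ((n:ℝ)+ρ))]
    congr 1 <;> ring
  simp_rw [h1]
  exact (hasSum_integral_iUnion (fun n : ℤ => measurableSet_Ioc)
    (Set.pairwise_disjoint_Ioc_add_intCast ρ) (hg.integrableOn)).summable

set_option maxHeartbeats 2000000 in
lemma inner_orth (k : ℕ) (hk : 0 < k) (ρ : ℝ) (A : ℤ → ℂ)
    (hA : Summable fun n => ‖A n‖) :
    ∫ x₁ in Set.Icc (0:ℝ) 1,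
      (∑' n : ℤ, A n * Complex.exp (2*(π:ℂ)*I*((n:ℂ)+(ρ:ℂ))*(k:ℂ)*(x₁:ℂ))) *
      (starRingEnd ℂ) (∑' n : ℤ, A n * Complex.exp (2*(π:ℂ)*I*((n:ℂ)+(ρ:ℂ))*(k:ℂ)*(x₁:ℂ)))
    = ((∑' n : ℤ, ‖A n‖^2 : ℝ) : ℂ) := by
  set e : ℤ → ℝ → ℂ := fun n x₁ => Complex.exp (2*(π:ℂ)*I*((n:ℂ)+(ρ:ℂ))*(k:ℂ)*(x₁:ℂ)) with he
  set F : ℤ × ℤ → ℝ → ℂ := fun p x₁ =>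
    (A p.1 * conj (A p.2)) * Complex.exp (2*(π:ℂ)*I*((((p.1 - p.2)*k : ℤ)):ℂ)*(x₁:ℂ)) with hF
  have hnorm : ∀ (n : ℤ) (x₁ : ℝ), ‖e n x₁‖ = 1 := by
    intro n x₁
    have : 2*(π:ℂ)*I*((n:ℂ)+(ρ:ℂ))*(k:ℂ)*(x₁:ℂ) = ((2*π*((n:ℝ)+ρ)*k*x₁ : ℝ) : ℂ) * I := by
      push_cast; ring
    rw [show e n x₁ = Complex.exp (2*(π:ℂ)*I*((n:ℂ)+(ρ:ℂ))*(k:ℂ)*(x₁:ℂ)) from rfl,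
      this, Complex.norm_exp_ofReal_mul_I]
  have hnorm2 : ∀ (c : ℤ) (x₁ : ℝ), ‖Complex.exp (2*(π:ℂ)*I*((c:ℤ):ℂ)*(x₁:ℂ))‖ = 1 := by
    intro c x₁
    have : 2*(π:ℂ)*I*((c:ℤ):ℂ)*(x₁:ℂ) = ((2*π*(c:ℝ)*x₁ : ℝ) : ℂ) * I := by
      push_cast; ring
    rw [this, Complex.norm_exp_ofReal_mul_I]
  have hAe : ∀ x₁ : ℝ, Summable (fun n => ‖A n * e n x₁‖) := by
    intro x₁; simpa [norm_mul, hnorm] using hA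
  have hAe' : ∀ x₁ : ℝ, Summable (fun n => ‖conj (A n * e n x₁)‖) := by
    intro x₁; simpa [RCLike.norm_conj] using hAe x₁
  have hterm : ∀ (n m : ℤ) (x₁ : ℝ),
      (A n * e n x₁) * conj (A m * e m x₁) = F (n, m) x₁ := by
    intro n m x₁
    rw [show e n x₁ = Complex.exp (2*(π:ℂ)*I*((n:ℂ)+(ρ:ℂ))*(k:ℂ)*(x₁:ℂ)) from rfl,
      show e m x₁ = Complex.exp (2*(π:ℂ)*I*((m:ℂ)+(ρ:ℂ))*(k:ℂ)*(x₁:ℂ)) from rfl,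
      show F (n, m) x₁ = (A n * conj (A m)) *
        Complex.exp (2*(π:ℂ)*I*((((n - m)*k : ℤ)):ℂ)*(x₁:ℂ)) from rfl,
      map_mul, ← Complex.exp_conj]
    have hc : conj (2*(π:ℂ)*I*((m:ℂ)+(ρ:ℂ))*(k:ℂ)*(x₁:ℂ))
        = -(2*(π:ℂ)*I*((m:ℂ)+(ρ:ℂ))*(k:ℂ)*(x₁:ℂ)) := by
      simp only [map_mul, Complex.conj_I, map_ofNat, Complex.conj_ofReal, map_add,
        map_intCast, map_natCast]
      ring
    rw [hc, mul_mul_mul_comm, ← Complex.exp_add]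
    congr 2
    push_cast
    ring
  have hpt : ∀ x₁ : ℝ,
      (∑' n : ℤ, A n * e n x₁) * (starRingEnd ℂ) (∑' n : ℤ, A n * e n x₁)
      = ∑' p : ℤ × ℤ, F p x₁ := by
    intro x₁
    rw [show (starRingEnd ℂ) (∑' n : ℤ, A n * e n x₁) = ∑' n : ℤ, conj (A n * e n x₁) by
      exact Complex.conjCLE.map_tsum]
    rw [tsum_mul_tsum_of_summable_norm (hAe x₁) (hAe' x₁)]
    exact tsum_congr fun p => hterm p.1 p.2 x₁
  have hFi : ∀ p : ℤ × ℤ, Integrable (F p) (volume.restrict (Set.Icc (0:ℝ) 1)) := by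
    intro p
    apply Continuous.integrableOn_Icc
    exact continuous_const.mul (Complex.continuous_exp.comp (by continuity))
  have hFnorm : ∀ (p : ℤ × ℤ) (x₁ : ℝ), ‖F p x₁‖ = ‖A p.1‖ * ‖A p.2‖ := by
    intro p x₁
    rw [hF]
    simp only [norm_mul, hnorm2, mul_one, RCLike.norm_conj]
  have hprodsum : Summable (fun p : ℤ × ℤ => ‖A p.1‖ * ‖A p.2‖) :=
    hA.mul_of_nonneg hA (fun _ => norm_nonneg _) (fun _ => norm_nonneg _)
  have hFs : Summable fun p : ℤ × ℤ => ∫ x₁ in Set.Icc (0:ℝ) 1, ‖F p x₁‖ := by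
    apply hprodsum.congr
    intro p
    simp only [hFnorm]
    rw [setIntegral_const]
    simp
  have heval : ∀ p : ℤ × ℤ, (∫ x₁ in Set.Icc (0:ℝ) 1, F p x₁)
      = if p.1 = p.2 then ((‖A p.1‖^2 : ℝ) : ℂ) else 0 := by
    rintro ⟨n, m⟩
    by_cases hnm : n = m
    · subst hnm
      simp only [if_pos rfl, hF, sub_self, zero_mul, Int.cast_zero, mul_zero, zero_mul,
        Complex.exp_zero, mul_one]
      rw [setIntegral_const]
      simp [Complex.mul_conj, Complex.normSq_eq_norm_sq]
    · simp only [if_neg hnm, hF]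
      have hc : ((((n - m)*k : ℤ)) : ℂ) ≠ 0 := by
        simp only [ne_eq, Int.cast_eq_zero, mul_eq_zero]
        push_neg
        exact ⟨sub_ne_zero.mpr hnm, by exact_mod_cast hk.ne'⟩
      have hc2 : (2*(π:ℂ)*I) * (((n - m)*k : ℤ) : ℂ) ≠ 0 := by
        apply mul_ne_zero _ hc
        simp [Real.pi_ne_zero, Complex.I_ne_zero, Complex.ofReal_ne_zero]
      rw [integral_Icc_eq_integral_Ioc, ← intervalIntegral.integral_of_le zero_le_one]
      rw [intervalIntegral.integral_const_mul, integral_exp_mul_complex hc2]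
      have h1 : (2*(π:ℂ)*I*((((n - m)*k : ℤ)):ℂ)) * ((1:ℝ):ℂ)
          = (((n - m)*k : ℤ) : ℂ) * (2*(π:ℂ)*I) := by push_cast; ring
      have h0 : (2*(π:ℂ)*I*((((n - m)*k : ℤ)):ℂ)) * ((0:ℝ):ℂ) = 0 := by push_cast; ring
      rw [h1, h0, Complex.exp_int_mul_two_pi_mul_I, Complex.exp_zero]
      simp
  calc ∫ x₁ in Set.Icc (0:ℝ) 1,
        (∑' n : ℤ, A n * e n x₁) * (starRingEnd ℂ) (∑' n : ℤ, A n * e n x₁)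
      = ∫ x₁ in Set.Icc (0:ℝ) 1, ∑' p : ℤ × ℤ, F p x₁ :=
        integral_congr_ae (Filter.Eventually.of_forall fun x₁ => hpt x₁)
    _ = ∑' p : ℤ × ℤ, ∫ x₁ in Set.Icc (0:ℝ) 1, F p x₁ :=
        (integral_tsum_of_summable_integral_norm hFi hFs).symm
    _ = ∑' p : ℤ × ℤ, (if p.1 = p.2 then ((‖A p.1‖^2 : ℝ) : ℂ) else 0) := tsum_congr heval
    _ = ∑' n : ℤ, ((‖A n‖^2 : ℝ) : ℂ) := by
        apply tsum_eq_tsum_of_ne_zero_bij (fun n => ((n.1 : ℤ), (n.1 : ℤ)))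
        · intro x y hxy
          simp only [Prod.mk.injEq] at hxy
          exact Subtype.ext hxy.1
        · rintro ⟨n, m⟩ hnm
          rw [Function.mem_support] at hnm
          by_cases h : n = m
          · subst h
            rw [if_pos rfl] at hnm
            exact ⟨⟨n, by rw [Function.mem_support]; exact hnm⟩, rfl⟩
          · rw [if_neg h] at hnm
            exact absurd rfl hnm
        · intro x
          simp
    _ = ((∑' n : ℤ, ‖A n‖^2 : ℝ) : ℂ) := (Complex.ofReal_tsum _).symm


/-- The theta function with characteristic `r ∈ ℚ`. -/
noncomputable def theta (r : ℚ) (z σ : ℂ) : ℂ :=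
  ∑' n : ℤ, Complex.exp ((π : ℂ) * I * σ * ((n : ℂ) + (r : ℂ)) ^ 2
    + 2 * (π : ℂ) * I * ((n : ℂ) + (r : ℂ)) * z)

set_option maxHeartbeats 2000000 in
/-- The squared norm of `θ_{a/k}(kx+u, kτ)` as a section of `L(k,u)` equals
`(2tk)^{-1/2} exp(2πtu₂²/k)`. -/
theorem stmt_2
    (τ : ℂ) (t : ℝ) (ht : τ.im = t) (htpos : 0 < t)
    (k : ℕ) (hk : 0 < k) (a : ℤ)
    (u : ℂ) (u₁ u₂ : ℝ) (hu : u = (u₁ : ℂ) + τ * (u₂ : ℂ)) :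
    (∫ x₂ in Set.Icc (0:ℝ) 1, ∫ x₁ in Set.Icc (0:ℝ) 1,
      theta ((a : ℚ)/k) ((k : ℂ) * ((x₁ : ℂ) + τ * (x₂ : ℂ)) + u) ((k : ℂ) * τ) *
      (starRingEnd ℂ) (theta ((a : ℚ)/k) ((k : ℂ) * ((x₁ : ℂ) + τ * (x₂ : ℂ)) + u) ((k : ℂ) * τ)) *
      Complex.exp (-(2 * (π : ℂ) * (t : ℂ) * ((k : ℂ) * (x₂ : ℂ) ^ 2 + 2 * (x₂ : ℂ) * (u₂ : ℂ))))) =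
    ((1 / Real.sqrt (2 * t * k) : ℝ) : ℂ) *
      Complex.exp (2 * (π : ℂ) * (t : ℂ) * (u₂ : ℂ) ^ 2 / (k : ℂ)) := by
  have hkR : (0:ℝ) < (k:ℝ) := by exact_mod_cast hk
  set ρ : ℝ := (a:ℝ)/(k:ℝ) with hρ
  set A : ℝ → ℤ → ℂ := fun x₂ n => Complex.exp ((π:ℂ) * I * ((k:ℂ)*τ) * ((n:ℂ)+(ρ:ℂ))^2
    + 2*(π:ℂ)*I*((n:ℂ)+(ρ:ℂ))*((k:ℂ)*τ*(x₂:ℂ)+u)) with hA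
  have hzim : ∀ x₂ : ℝ, ((k:ℂ)*τ*(x₂:ℂ)+u).im = (k:ℝ)*t*x₂ + t*u₂ := by
    intro x₂
    rw [hu]
    simp only [Complex.add_im, Complex.mul_im, Complex.natCast_re, Complex.natCast_im,
      Complex.ofReal_re, Complex.ofReal_im, ht]
    ring
  have hAnorm : ∀ (x₂ : ℝ) (n : ℤ), ‖A x₂ n‖
      = Real.exp (-(π*((k:ℝ)*t)) * ((n:ℝ)+ρ)^2
        + (-(2*π*((k:ℝ)*t*x₂+t*u₂))) * ((n:ℝ)+ρ)) := by
    intro x₂ n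
    have hw : (π:ℂ) * I * ((k:ℂ)*τ) * ((n:ℂ)+(ρ:ℂ))^2
        + 2*(π:ℂ)*I*((n:ℂ)+(ρ:ℂ))*((k:ℂ)*τ*(x₂:ℂ)+u)
        = I * (((π*((n:ℝ)+ρ)^2 : ℝ):ℂ) * ((k:ℂ)*τ)
          + ((2*π*((n:ℝ)+ρ) : ℝ):ℂ) * ((k:ℂ)*τ*(x₂:ℂ)+u)) := by
      push_cast; ring
    rw [show A x₂ n = Complex.exp ((π:ℂ) * I * ((k:ℂ)*τ) * ((n:ℂ)+(ρ:ℂ))^2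
      + 2*(π:ℂ)*I*((n:ℂ)+(ρ:ℂ))*((k:ℂ)*τ*(x₂:ℂ)+u)) from rfl, hw,
      Complex.norm_exp]
    congr 1
    simp only [Complex.mul_re, Complex.I_re, Complex.I_im, Complex.add_im, Complex.mul_im,
      Complex.ofReal_re, Complex.ofReal_im, Complex.add_re, Complex.mul_re,
      Complex.natCast_re, Complex.natCast_im, hzim x₂, ht]
    ring
  have hAsum : ∀ x₂ : ℝ, Summable (fun n => ‖A x₂ n‖) := by
    intro x₂
    apply (summable_exp_quad (by positivity : (0:ℝ) < π*((k:ℝ)*t))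
      (-(2*π*((k:ℝ)*t*x₂+t*u₂))) ρ).congr
    intro n
    rw [hAnorm x₂ n]
  have htheta : ∀ x₁ x₂ : ℝ,
      theta ((a : ℚ)/k) ((k : ℂ) * ((x₁ : ℂ) + τ * (x₂ : ℂ)) + u) ((k : ℂ) * τ)
      = ∑' n : ℤ, A x₂ n * Complex.exp (2*(π:ℂ)*I*((n:ℂ)+(ρ:ℂ))*(k:ℂ)*(x₁:ℂ)) := by
    intro x₁ x₂
    rw [theta]
    apply tsum_congr
    intro n
    rw [show A x₂ n = Complex.exp ((π:ℂ) * I * ((k:ℂ)*τ) * ((n:ℂ)+(ρ:ℂ))^2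
      + 2*(π:ℂ)*I*((n:ℂ)+(ρ:ℂ))*((k:ℂ)*τ*(x₂:ℂ)+u)) from rfl, ← Complex.exp_add]
    congr 1
    have hρC : ((ρ:ℝ):ℂ) = (a:ℂ) * ((k:ℂ))⁻¹ := by rw [hρ]; push_cast; ring
    simp only [hρC]
    push_cast
    ring
  have hinner : ∀ x₂ : ℝ,
      (∫ x₁ in Set.Icc (0:ℝ) 1,
        theta ((a : ℚ)/k) ((k : ℂ) * ((x₁ : ℂ) + τ * (x₂ : ℂ)) + u) ((k : ℂ) * τ) *
        (starRingEnd ℂ) (theta ((a : ℚ)/k) ((k : ℂ) * ((x₁ : ℂ) + τ * (x₂ : ℂ)) + u) ((k : ℂ) * τ)))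
      = ((∑' n : ℤ, ‖A x₂ n‖^2 : ℝ) : ℂ) := by
    intro x₂
    simp_rw [htheta _ x₂]
    exact inner_orth k hk ρ (A x₂) (hAsum x₂)
  -- the real Gaussian-type function
  set g : ℝ → ℝ := fun y => Real.exp (-(2*π*t*(k:ℝ)*y^2 + 4*π*t*u₂*y)) with hg
  have hc : (0:ℝ) < 2*π*t*(k:ℝ) := by positivity
  have hgint : Integrable g := by
    have := integrable_gauss hc (4*π*t*u₂)
    exact this
  have hSterm : ∀ (x₂ : ℝ) (n : ℤ),
      ‖A x₂ n‖^2 * Real.exp (-(2*π*t*((k:ℝ)*x₂^2+2*x₂*u₂))) = g (x₂ + ((n:ℝ)+ρ)) := by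
    intro x₂ n
    rw [hAnorm x₂ n, sq, ← Real.exp_add, ← Real.exp_add,
      show g (x₂ + ((n:ℝ)+ρ)) = Real.exp (-(2*π*t*(k:ℝ)*(x₂ + ((n:ℝ)+ρ))^2
        + 4*π*t*u₂*(x₂ + ((n:ℝ)+ρ)))) from rfl]
    congr 1
    ring
  have hG : ∀ x₂ : ℝ, (∑' n : ℤ, ‖A x₂ n‖^2) * Real.exp (-(2*π*t*((k:ℝ)*x₂^2+2*x₂*u₂)))
      = ∑' n : ℤ, g (x₂ + ((n:ℝ)+ρ)) := by
    intro x₂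
    rw [← tsum_mul_right]
    exact tsum_congr fun n => hSterm x₂ n
  -- rewrite the full integrand
  have hstep1 : ∀ x₂ : ℝ,
      (∫ x₁ in Set.Icc (0:ℝ) 1,
        theta ((a : ℚ)/k) ((k : ℂ) * ((x₁ : ℂ) + τ * (x₂ : ℂ)) + u) ((k : ℂ) * τ) *
        (starRingEnd ℂ) (theta ((a : ℚ)/k) ((k : ℂ) * ((x₁ : ℂ) + τ * (x₂ : ℂ)) + u) ((k : ℂ) * τ)) *
        Complex.exp (-(2 * (π : ℂ) * (t : ℂ) * ((k : ℂ) * (x₂ : ℂ) ^ 2 + 2 * (x₂ : ℂ) * (u₂ : ℂ)))))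
      = ((∑' n : ℤ, g (x₂ + ((n:ℝ)+ρ)) : ℝ) : ℂ) := by
    intro x₂
    rw [integral_mul_const, hinner x₂]
    rw [show (-(2 * (π : ℂ) * (t : ℂ) * ((k : ℂ) * (x₂ : ℂ) ^ 2 + 2 * (x₂ : ℂ) * (u₂ : ℂ))))
      = ((-(2*π*t*((k:ℝ)*x₂^2+2*x₂*u₂)) : ℝ) : ℂ) by push_cast; ring]
    rw [← Complex.ofReal_exp, ← Complex.ofReal_mul, hG x₂]
  -- now compute the real integral
  have hswap : ∫ x₂ in Set.Icc (0:ℝ) 1, ∑' n : ℤ, g (x₂ + ((n:ℝ)+ρ))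
      = ∑' n : ℤ, ∫ x₂ in Set.Icc (0:ℝ) 1, g (x₂ + ((n:ℝ)+ρ)) := by
    refine (integral_tsum_of_summable_integral_norm (fun n => ?_) ?_).symm
    · apply Continuous.integrableOn_Icc
      exact Real.continuous_exp.comp (by continuity)
    · simp only [hg, Real.norm_eq_abs, Real.abs_exp]
      exact hassum_tiling hgint ρ
  -- final numerical identities
  have h1 : Real.sqrt (π/(2*π*t*(k:ℝ))) = 1 / Real.sqrt (2*t*(k:ℝ)) := by
    rw [show π/(2*π*t*(k:ℝ)) = (2*t*(k:ℝ))⁻¹ by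
      field_simp, Real.sqrt_inv, one_div]
  have h2 : (4*π*t*u₂)^2/(4*(2*π*t*(k:ℝ))) = 2*π*t*u₂^2/(k:ℝ) := by
    field_simp
    ring
  have hfinal : (∫ x₂ in Set.Icc (0:ℝ) 1, ∑' n : ℤ, g (x₂ + ((n:ℝ)+ρ)))
      = (1/Real.sqrt (2*t*(k:ℝ))) * Real.exp (2*π*t*u₂^2/(k:ℝ)) := by
    rw [hswap, tiling hgint ρ, gauss_int hc (4*π*t*u₂), h1, h2]
  rw [integral_congr_ae (Filter.Eventually.of_forall hstep1)]
  rw [show (∫ x₂ in Set.Icc (0:ℝ) 1, ((∑' n : ℤ, g (x₂ + ((n:ℝ)+ρ)) : ℝ) : ℂ))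
    = ((∫ x₂ in Set.Icc (0:ℝ) 1, ∑' n : ℤ, g (x₂ + ((n:ℝ)+ρ)) : ℝ) : ℂ) from integral_ofReal,
    hfinal]
  rw [show (2 * (π:ℂ) * (t:ℂ) * (u₂:ℂ)^2 / (k:ℂ)) = ((2*π*t*u₂^2/(k:ℝ) : ℝ) : ℂ) by
    push_cast; ring, ← Complex.ofReal_exp, ← Complex.ofReal_mul]
end

section
/- For k > 0, the theta functions θ_{a/k}(kx+u, kτ) for a = 0, 1, …, k-1 are pairwise orthogonal with respect to the hermitian inner product on sections of L(k,u): if a ≢ b mod k then ∫_{[0,1]²} θ_{a/k}(kx+u,kτ) · conj(θ_{b/k}(kx+u,kτ)) · exp(-2πt(kx₂² + 2x₂u₂)) dx₁dx₂ = 0. -/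
open Complex Real MeasureTheory

/-- Quasi-periodicity: `θ_r(z+1) = e^{2πir} θ_r(z)`. -/
lemma theta_add_one (r : ℚ) (z σ : ℂ) :
    theta r (z + 1) σ = Complex.exp (2 * (π : ℂ) * I * (r : ℂ)) * theta r z σ := by
  unfold theta
  rw [← tsum_mul_left]
  refine tsum_congr fun n => ?_
  have h : (π : ℂ) * I * σ * ((n : ℂ) + (r : ℂ)) ^ 2
      + 2 * (π : ℂ) * I * ((n : ℂ) + (r : ℂ)) * (z + 1)
      = (2 * (π : ℂ) * I * (r : ℂ) + ((π : ℂ) * I * σ * ((n : ℂ) + (r : ℂ)) ^ 2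
        + 2 * (π : ℂ) * I * ((n : ℂ) + (r : ℂ)) * z)) + (n : ℂ) * (2 * (π : ℂ) * I) := by
    ring
  rw [h, Complex.exp_add, Complex.exp_int_mul_two_pi_mul_I, mul_one, Complex.exp_add]

/-- Periodicity: `θ_{a/k}(z+k) = θ_{a/k}(z)` for `a : ℤ`, `k ≠ 0`. -/
lemma theta_add_nat (a : ℤ) (k : ℕ) (hk : 0 < k) (z σ : ℂ) :
    theta ((a : ℚ)/k) (z + (k : ℂ)) σ = theta ((a : ℚ)/k) z σ := by
  unfold theta
  refine tsum_congr fun n => ?_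
  have hkC : (k : ℂ) ≠ 0 := Nat.cast_ne_zero.mpr hk.ne'
  have hcast : (((a : ℚ)/k : ℚ) : ℂ) = (a : ℂ) / (k : ℂ) := by push_cast; ring
  have h : (π : ℂ) * I * σ * ((n : ℂ) + (((a : ℚ)/k : ℚ) : ℂ)) ^ 2
      + 2 * (π : ℂ) * I * ((n : ℂ) + (((a : ℚ)/k : ℚ) : ℂ)) * (z + (k : ℂ))
      = ((π : ℂ) * I * σ * ((n : ℂ) + (((a : ℚ)/k : ℚ) : ℂ)) ^ 2
        + 2 * (π : ℂ) * I * ((n : ℂ) + (((a : ℚ)/k : ℚ) : ℂ)) * z)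
        + ((k * n + a : ℤ) : ℂ) * (2 * (π : ℂ) * I) := by
    rw [hcast]
    push_cast
    field_simp
    ring
  rw [h, Complex.exp_add, Complex.exp_int_mul_two_pi_mul_I, mul_one]

/-- The theta functions `θ_{a/k}(kx+u, kτ)`, `a = 0, …, k-1`, are pairwise orthogonal
with respect to the hermitian inner product on sections of `L(k,u)`. -/
theorem stmt_3
    (τ : ℂ) (t : ℝ) (ht : τ.im = t) (htpos : 0 < t)
    (k : ℕ) (hk : 0 < k) (a b : ℤ) (hab : ¬ ((k : ℤ) ∣ (a - b)))
    (u : ℂ) (u₁ u₂ : ℝ) (hu : u = (u₁ : ℂ) + τ * (u₂ : ℂ)) :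
    (∫ x₂ in Set.Icc (0:ℝ) 1, ∫ x₁ in Set.Icc (0:ℝ) 1,
      theta ((a : ℚ)/k) ((k : ℂ) * ((x₁ : ℂ) + τ * (x₂ : ℂ)) + u) ((k : ℂ) * τ) *
      (starRingEnd ℂ) (theta ((b : ℚ)/k) ((k : ℂ) * ((x₁ : ℂ) + τ * (x₂ : ℂ)) + u) ((k : ℂ) * τ)) *
      Complex.exp (-(2 * (π : ℂ) * (t : ℂ) * ((k : ℂ) * (x₂ : ℂ) ^ 2 + 2 * (x₂ : ℂ) * (u₂ : ℂ))))) =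
    0 := by
  have hkR : (k : ℝ) ≠ 0 := Nat.cast_ne_zero.mpr hk.ne'
  have hkC : (k : ℂ) ≠ 0 := Nat.cast_ne_zero.mpr hk.ne'
  have hinner : ∀ x₂ : ℝ, (∫ x₁ in Set.Icc (0:ℝ) 1,
      theta ((a : ℚ)/k) ((k : ℂ) * ((x₁ : ℂ) + τ * (x₂ : ℂ)) + u) ((k : ℂ) * τ) *
      (starRingEnd ℂ) (theta ((b : ℚ)/k) ((k : ℂ) * ((x₁ : ℂ) + τ * (x₂ : ℂ)) + u) ((k : ℂ) * τ)) *
      Complex.exp (-(2 * (π : ℂ) * (t : ℂ) * ((k : ℂ) * (x₂ : ℂ) ^ 2 + 2 * (x₂ : ℂ) * (u₂ : ℂ)))))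
      = 0 := by
    intro x₂
    set C : ℂ := Complex.exp (-(2 * (π : ℂ) * (t : ℂ) *
      ((k : ℂ) * (x₂ : ℂ) ^ 2 + 2 * (x₂ : ℂ) * (u₂ : ℂ)))) with hC
    set g : ℝ → ℂ := fun x₁ =>
      theta ((a : ℚ)/k) ((k : ℂ) * ((x₁ : ℂ) + τ * (x₂ : ℂ)) + u) ((k : ℂ) * τ) *
      (starRingEnd ℂ) (theta ((b : ℚ)/k) ((k : ℂ) * ((x₁ : ℂ) + τ * (x₂ : ℂ)) + u) ((k : ℂ) * τ)) *
      C with hg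
    set ω : ℂ := Complex.exp (2 * (π : ℂ) * I * (((a : ℂ) - (b : ℂ)) / (k : ℂ))) with hω
    -- g is 1-periodic
    have hper : Function.Periodic g 1 := by
      intro x
      have hz : (k : ℂ) * (((x + 1 : ℝ) : ℂ) + τ * (x₂ : ℂ)) + u
          = ((k : ℂ) * ((x : ℂ) + τ * (x₂ : ℂ)) + u) + (k : ℂ) := by push_cast; ring
      simp only [hg, hz, theta_add_nat a k hk, theta_add_nat b k hk]
    -- quasi-periodicity with step 1/k
    have hshift : ∀ x : ℝ, g (x + 1 / (k : ℝ)) = ω * g x := by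
      intro x
      have hz : (k : ℂ) * (((x + 1 / (k : ℝ) : ℝ) : ℂ) + τ * (x₂ : ℂ)) + u
          = ((k : ℂ) * ((x : ℂ) + τ * (x₂ : ℂ)) + u) + 1 := by
        push_cast
        field_simp
        ring
      have hacast : (((a : ℚ)/k : ℚ) : ℂ) = (a : ℂ) / (k : ℂ) := by push_cast; ring
      have hbcast : (((b : ℚ)/k : ℚ) : ℂ) = (b : ℂ) / (k : ℂ) := by push_cast; ring
      have hconj : (starRingEnd ℂ) (Complex.exp (2 * (π : ℂ) * I * ((b : ℂ) / (k : ℂ))))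
          = Complex.exp (-(2 * (π : ℂ) * I * ((b : ℂ) / (k : ℂ)))) := by
        rw [← Complex.exp_conj]
        congr 1
        simp only [map_mul, map_div₀, Complex.conj_I, map_ofNat, Complex.conj_ofReal,
          map_intCast, map_natCast]
        ring
      simp only [hg, hz, theta_add_one, hacast, hbcast, map_mul, hconj]
      rw [hω]
      rw [show Complex.exp (2 * (π : ℂ) * I * (((a : ℂ) - (b : ℂ)) / (k : ℂ)))
          = Complex.exp (2 * (π : ℂ) * I * ((a : ℂ) / (k : ℂ))) *
            Complex.exp (-(2 * (π : ℂ) * I * ((b : ℂ) / (k : ℂ)))) by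
        rw [← Complex.exp_add]; congr 1; field_simp; ring]
      ring
    -- ω ≠ 1
    have hω1 : ω ≠ 1 := by
      intro h
      rw [hω, Complex.exp_eq_one_iff] at h
      obtain ⟨n, hn⟩ := h
      have h2 : (2 * (π : ℂ) * I) * (((a : ℂ) - (b : ℂ)) / (k : ℂ))
          = (2 * (π : ℂ) * I) * (n : ℂ) := by linear_combination hn
      have h2pi : (2 * (π : ℂ) * I) ≠ 0 := by
        simp [Complex.I_ne_zero, Real.pi_ne_zero, Complex.ofReal_ne_zero]
      have h3 : ((a : ℂ) - (b : ℂ)) / (k : ℂ) = (n : ℂ) := mul_left_cancel₀ h2pi h2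
      have h4 : (a : ℂ) - (b : ℂ) = (n : ℂ) * (k : ℂ) := by
        field_simp at h3; linear_combination h3
      have h5 : a - b = n * k := by exact_mod_cast h4
      exact hab ⟨n, by linarith⟩
    -- the interval-integral version
    have hIcc : (∫ x₁ in Set.Icc (0:ℝ) 1, g x₁) = ∫ x₁ in (0:ℝ)..1, g x₁ := by
      rw [intervalIntegral.integral_of_le zero_le_one, MeasureTheory.integral_Icc_eq_integral_Ioc]
    have hkey : (∫ x₁ in (0:ℝ)..1, g x₁) = ω * ∫ x₁ in (0:ℝ)..1, g x₁ := by
      have e1 := hper.intervalIntegral_add_eq 0 (1/(k:ℝ))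
      rw [zero_add] at e1
      have e2 := intervalIntegral.integral_comp_add_right g (1/(k:ℝ)) (a := 0) (b := 1)
      rw [zero_add] at e2
      conv_lhs => rw [e1, show (1/(k:ℝ) + 1) = 1 + 1/(k:ℝ) by ring, ← e2]
      simp only [hshift]
      rw [intervalIntegral.integral_const_mul]
    have hzero : (∫ x₁ in (0:ℝ)..1, g x₁) = 0 := by
      have h0 : (1 - ω) * (∫ x₁ in (0:ℝ)..1, g x₁) = 0 := by
        rw [sub_mul, one_mul, ← hkey, sub_self]
      rcases mul_eq_zero.mp h0 with h' | h'
      · exact absurd (sub_eq_zero.mp h').symm hω1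
      · exact h'
    rw [hIcc]
    exact hzero
  simp only [hinner, integral_zero]
end

section
/- (Addition formula for theta functions) Let k, l be positive integers with greatest common divisor r, let u, v ∈ ℂ, w = u + v, and b, c ∈ ℤ. Then θ_{b/k}(kx+u, kτ) · θ_{c/l}(lx+v, lτ) = Σ_{p ∈ ℤ/((k+l)/r)ℤ} θ_{(b/k - c/l + p)·r/(k+l)}( ((k+l)u - kw)/r, (k+l)kl τ/r² ) · θ_{(b+c+kp)/(k+l)}( (k+l)x + w, (k+l)τ ), where fixed integer representatives of b and c (and of p) are chosen. -/
open Complex Real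

set_option maxHeartbeats 1000000

noncomputable def thterm (a : ℚ) (z σ : ℂ) (n : ℤ) : ℂ :=
  Complex.exp ((π : ℂ) * I * σ * ((n : ℂ) + (a : ℂ)) ^ 2
    + 2 * (π : ℂ) * I * ((n : ℂ) + (a : ℂ)) * z)

lemma theta_eq (a : ℚ) (z σ : ℂ) : theta a z σ = ∑' n : ℤ, thterm a z σ n := rfl

lemma thterm_eq_jacobi (a : ℚ) (z σ : ℂ) (n : ℤ) :
    thterm a z σ n = Complex.exp ((π : ℂ) * I * σ * (a : ℂ) ^ 2 + 2 * (π : ℂ) * I * (a : ℂ) * z)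
      * jacobiTheta₂_term n (z + σ * (a : ℂ)) σ := by
  rw [thterm, jacobiTheta₂_term, ← Complex.exp_add]
  congr 1
  ring

lemma summable_thterm (a : ℚ) (z σ : ℂ) (h : 0 < σ.im) : Summable (thterm a z σ) := by
  refine (((summable_jacobiTheta₂_term_iff (z + σ * (a : ℂ)) σ).mpr h).mul_left
    (Complex.exp ((π : ℂ) * I * σ * (a : ℂ) ^ 2 + 2 * (π : ℂ) * I * (a : ℂ) * z))).congr
    fun n => (thterm_eq_jacobi a z σ n).symm

lemma summable_norm_thterm (a : ℚ) (z σ : ℂ) (h : 0 < σ.im) :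
    Summable (fun n => ‖thterm a z σ n‖) :=
  summable_norm_iff.mpr (summable_thterm a z σ h)

/-- Reindexing equivalence. -/
def addEquiv (M k₁ l₁ : ℕ) (hM : M = k₁ + l₁) (h0 : 0 < M) : (Fin M × ℤ × ℤ) ≃ ℤ × ℤ where
  toFun y := (y.2.2 + l₁ * y.2.1 + (y.1 : ℤ), y.2.2 - k₁ * y.2.1)
  invFun mn := (⟨((mn.1 - mn.2) % M).toNat, by
      have hM0 : ((M : ℤ)) ≠ 0 := by exact_mod_cast h0.ne'
      have h1 := Int.emod_nonneg (mn.1 - mn.2) hM0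
      have h2 := Int.emod_lt_of_pos (mn.1 - mn.2) (by exact_mod_cast h0 : (0:ℤ) < M)
      omega⟩,
    ((mn.1 - mn.2) / M, mn.2 + k₁ * ((mn.1 - mn.2) / M)))
  left_inv := by
    rintro ⟨p, q, n'⟩
    have hM0 : ((M : ℤ)) ≠ 0 := by exact_mod_cast h0.ne'
    have hM' : (M : ℤ) = (k₁ : ℤ) + (l₁ : ℤ) := by exact_mod_cast hM
    have hp0 : (0 : ℤ) ≤ ((p : ℕ) : ℤ) := Int.natCast_nonneg _
    have hpM : ((p : ℕ) : ℤ) < (M : ℤ) := by exact_mod_cast p.2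
    have hd : ((n' + l₁ * q + ((p : ℕ) : ℤ)) - (n' - k₁ * q)) = (M : ℤ) * q + ((p : ℕ) : ℤ) := by
      linear_combination (-q) * hM'
    have he : ((M : ℤ) * q + ((p : ℕ) : ℤ)) % M = ((p : ℕ) : ℤ) := by
      rw [add_comm, Int.add_mul_emod_self_left, Int.emod_eq_of_lt hp0 hpM]
    have hq : ((M : ℤ) * q + ((p : ℕ) : ℤ)) / M = q := by
      rw [add_comm, Int.add_mul_ediv_left _ q hM0, Int.ediv_eq_zero_of_lt hp0 hpM, zero_add]
    simp only [Prod.mk.injEq]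
    refine ⟨?_, ?_, ?_⟩
    · ext
      simp only [hd, he, Int.toNat_natCast]
    · rw [hd, hq]
    · rw [hd, hq]; ring
  right_inv := by
    rintro ⟨m, n⟩
    have hM0 : ((M : ℤ)) ≠ 0 := by exact_mod_cast h0.ne'
    have h1 := Int.emod_nonneg (m - n) hM0
    have h3 := Int.emod_add_mul_ediv (m - n) (M : ℤ)
    have hM' : (M : ℤ) = (k₁ : ℤ) + (l₁ : ℤ) := by exact_mod_cast hM
    simp only [Prod.mk.injEq]
    refine ⟨?_, ?_⟩
    · rw [Int.toNat_of_nonneg h1]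
      linear_combination h3 - ((m - n) / (M : ℤ)) * hM'
    · ring

lemma key (τ x u v : ℂ) (r k₁ l₁ : ℕ) (hr0 : 0 < r) (hk₁ : 0 < k₁) (hl₁ : 0 < l₁)
    (b c : ℤ) (p : ℕ) (q n' : ℤ) :
    thterm ((b : ℚ)/(r*k₁ : ℕ)) (((r*k₁ : ℕ) : ℂ) * x + u) (((r*k₁ : ℕ) : ℂ) * τ) (n' + l₁*q + p) *
      thterm ((c : ℚ)/(r*l₁ : ℕ)) (((r*l₁ : ℕ) : ℂ) * x + v) (((r*l₁ : ℕ) : ℂ) * τ) (n' - k₁*q) =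
    thterm (((b : ℚ)/(r*k₁ : ℕ) - (c : ℚ)/(r*l₁ : ℕ) + (p : ℚ)) * (r : ℚ)/(((r*k₁ : ℕ) : ℚ) + (r*l₁ : ℕ)))
        (((((r*k₁ : ℕ) : ℂ) + (r*l₁ : ℕ)) * u - ((r*k₁ : ℕ) : ℂ) * (u+v))/(r : ℂ))
        ((((r*k₁ : ℕ) : ℂ) + (r*l₁ : ℕ)) * ((r*k₁ : ℕ) : ℂ) * ((r*l₁ : ℕ) : ℂ) * τ/(r : ℂ)^2) q *
      thterm (((b : ℚ) + c + ((r*k₁ : ℕ) : ℚ) * p)/(((r*k₁ : ℕ) : ℚ) + (r*l₁ : ℕ)))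
        ((((r*k₁ : ℕ) : ℂ) + (r*l₁ : ℕ)) * x + (u+v)) ((((r*k₁ : ℕ) : ℂ) + (r*l₁ : ℕ)) * τ) n' := by
  have hR : (r : ℂ) ≠ 0 := Nat.cast_ne_zero.mpr hr0.ne'
  have hK : (k₁ : ℂ) ≠ 0 := Nat.cast_ne_zero.mpr hk₁.ne'
  have hL : (l₁ : ℂ) ≠ 0 := Nat.cast_ne_zero.mpr hl₁.ne'
  have hKL0 : ((r*k₁ : ℕ) : ℂ) + ((r*l₁ : ℕ) : ℂ) ≠ 0 := by
    have h : ((r*k₁ + r*l₁ : ℕ) : ℂ) ≠ 0 := Nat.cast_ne_zero.mpr (by positivity)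
    push_cast at h ⊢; exact h
  simp only [thterm, ← Complex.exp_add]
  congr 1
  set K : ℂ := ((r*k₁ : ℕ) : ℂ) with hKdef
  set L : ℂ := ((r*l₁ : ℕ) : ℂ) with hLdef
  set A : ℂ := ((n' + l₁*q + p : ℤ) : ℂ) + (((b : ℚ)/(r*k₁ : ℕ) : ℚ) : ℂ) with hA
  set B : ℂ := ((n' - k₁*q : ℤ) : ℂ) + (((c : ℚ)/(r*l₁ : ℕ) : ℚ) : ℂ) with hB
  have hQ : (q : ℂ) + ((((b : ℚ)/(r*k₁ : ℕ) - (c : ℚ)/(r*l₁ : ℕ) + (p : ℚ)) * (r : ℚ)/(((r*k₁ : ℕ) : ℚ) + (r*l₁ : ℕ)) : ℚ) : ℂ)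
      = (A - B) * (r : ℂ) / (K + L) := by
    rw [hA, hB, hKdef, hLdef]
    have h3 : (r:ℂ)*k₁ + (r:ℂ)*l₁ ≠ 0 := by
      have := hKL0; rw [hKdef, hLdef] at this; push_cast at this; exact this
    have h4 : (k₁:ℂ) + l₁ ≠ 0 := fun h => h3 (by linear_combination (r:ℂ) * h)
    push_cast
    field_simp
    ring
  have hN : ((n' : ℤ) : ℂ) + ((((b : ℚ) + c + ((r*k₁ : ℕ) : ℚ) * p)/(((r*k₁ : ℕ) : ℚ) + (r*l₁ : ℕ)) : ℚ) : ℂ)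
      = (K * A + L * B) / (K + L) := by
    rw [hA, hB, hKdef, hLdef]
    have h3 : (r:ℂ)*k₁ + (r:ℂ)*l₁ ≠ 0 := by
      have := hKL0; rw [hKdef, hLdef] at this; push_cast at this; exact this
    have h4 : (k₁:ℂ) + l₁ ≠ 0 := fun h => h3 (by linear_combination (r:ℂ) * h)
    push_cast
    field_simp
    ring
  have hKL : K + L ≠ 0 := hKL0
  clear_value K L A B
  clear hKdef hLdef hA hB hKL0
  rw [hQ, hN]
  obtain ⟨S, rfl⟩ : ∃ S, L = S - K := ⟨K + L, by ring⟩
  have hS : S ≠ 0 := fun h => hKL (by rw [h]; ring)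
  have e1 : K + (S - K) = S := by ring
  rw [e1]
  field_simp [hS, hR]
  ring

/-- The addition formula for theta functions. -/
theorem stmt_7
    (τ : ℂ) (hτ : 0 < τ.im)
    (k l : ℕ) (hk : 0 < k) (hl : 0 < l) (r : ℕ) (hr : r = Nat.gcd k l)
    (b c : ℤ) (u v x w : ℂ) (hw : w = u + v) :
    theta ((b : ℚ)/k) ((k : ℂ) * x + u) ((k : ℂ) * τ) *
      theta ((c : ℚ)/l) ((l : ℂ) * x + v) ((l : ℂ) * τ) =
    ∑ p ∈ Finset.range ((k + l)/r),
      theta (((b : ℚ)/k - (c : ℚ)/l + (p : ℚ)) * (r : ℚ)/((k : ℚ) + l))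
        ((((k : ℂ) + l) * u - (k : ℂ) * w)/(r : ℂ))
        (((k : ℂ) + l) * (k : ℂ) * (l : ℂ) * τ/(r : ℂ)^2) *
      theta (((b : ℚ) + c + (k : ℚ) * p)/((k : ℚ) + l))
        (((k : ℂ) + l) * x + w) (((k : ℂ) + l) * τ) := by

  subst hw
  obtain ⟨k₁, hk₁⟩ : r ∣ k := hr ▸ Nat.gcd_dvd_left k l
  obtain ⟨l₁, hl₁⟩ : r ∣ l := hr ▸ Nat.gcd_dvd_right k l
  have hr0 : 0 < r := by
    rw [hr]; exact Nat.gcd_pos_of_pos_left l hk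
  have hk₁0 : 0 < k₁ := by
    rcases Nat.eq_zero_or_pos k₁ with h | h
    · subst h; rw [Nat.mul_zero] at hk₁; omega
    · exact h
  have hl₁0 : 0 < l₁ := by
    rcases Nat.eq_zero_or_pos l₁ with h | h
    · subst h; rw [Nat.mul_zero] at hl₁; omega
    · exact h
  subst hk₁; subst hl₁
  set M := k₁ + l₁ with hMdef
  have hM0 : 0 < M := by omega
  have hrange : (r*k₁ + r*l₁)/r = M := by
    rw [← Nat.mul_add, Nat.mul_div_cancel_left _ hr0]
  -- imaginary parts
  have himNat : ∀ a : ℕ, 0 < a → 0 < ((a : ℂ) * τ).im := by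
    intro a ha
    have h : ((a : ℂ) * τ).im = (a : ℝ) * τ.im := by simp [Complex.mul_im]
    rw [h]
    exact mul_pos (by exact_mod_cast ha) hτ
  have him1 : 0 < (((r*k₁ : ℕ) : ℂ) * τ).im := himNat _ (by positivity)
  have him2 : 0 < (((r*l₁ : ℕ) : ℂ) * τ).im := himNat _ (by positivity)
  have hcastKL : ((r*k₁ : ℕ) : ℂ) + ((r*l₁ : ℕ) : ℂ) = ((r*k₁ + r*l₁ : ℕ) : ℂ) := by push_cast; ring
  have him3 : 0 < (((( r*k₁ : ℕ) : ℂ) + ((r*l₁ : ℕ) : ℂ)) * τ).im := by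
    rw [hcastKL]; exact himNat _ (by positivity)
  have him4 : 0 < (((( r*k₁ : ℕ) : ℂ) + ((r*l₁ : ℕ) : ℂ)) * ((r*k₁ : ℕ) : ℂ) * ((r*l₁ : ℕ) : ℂ) * τ / ((r : ℕ) : ℂ)^2).im := by
    have hrw : (((( r*k₁ : ℕ) : ℂ) + ((r*l₁ : ℕ) : ℂ)) * ((r*k₁ : ℕ) : ℂ) * ((r*l₁ : ℕ) : ℂ) * τ / ((r : ℕ) : ℂ)^2)
        = ((((r*k₁ + r*l₁)*(r*k₁)*(r*l₁) : ℕ) : ℝ)/((r : ℕ) : ℝ)^2 : ℝ) * τ := by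
      push_cast; ring
    rw [hrw, Complex.im_ofReal_mul]
    apply mul_pos _ hτ
    apply div_pos
    · exact_mod_cast Nat.pos_of_ne_zero (by positivity)
    · positivity
  -- summabilities
  have hn1 := summable_norm_thterm ((b : ℚ)/(r*k₁ : ℕ)) (((r*k₁ : ℕ) : ℂ) * x + u) _ him1
  have hn2 := summable_norm_thterm ((c : ℚ)/(r*l₁ : ℕ)) (((r*l₁ : ℕ) : ℂ) * x + v) _ him2
  have hF : Summable (fun mn : ℤ × ℤ =>
      thterm ((b : ℚ)/(r*k₁ : ℕ)) (((r*k₁ : ℕ) : ℂ) * x + u) (((r*k₁ : ℕ) : ℂ) * τ) mn.1 *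
      thterm ((c : ℚ)/(r*l₁ : ℕ)) (((r*l₁ : ℕ) : ℂ) * x + v) (((r*l₁ : ℕ) : ℂ) * τ) mn.2) :=
    summable_mul_of_summable_norm hn1 hn2
  simp only [theta_eq]
  rw [tsum_mul_tsum_of_summable_norm hn1 hn2]
  set e := addEquiv M k₁ l₁ rfl hM0 with hedef
  have hFe : Summable (fun y : Fin M × ℤ × ℤ =>
      thterm ((b : ℚ)/(r*k₁ : ℕ)) (((r*k₁ : ℕ) : ℂ) * x + u) (((r*k₁ : ℕ) : ℂ) * τ) (e y).1 *
      thterm ((c : ℚ)/(r*l₁ : ℕ)) (((r*l₁ : ℕ) : ℂ) * x + v) (((r*l₁ : ℕ) : ℂ) * τ) (e y).2) :=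
    e.summable_iff.mpr hF
  rw [← e.tsum_eq, hFe.tsum_prod, tsum_fintype]
  rw [hrange, ← Fin.sum_univ_eq_sum_range]
  refine Finset.sum_congr rfl fun p _ => ?_
  have hnp1 := summable_norm_thterm
    (((b : ℚ)/(r*k₁ : ℕ) - (c : ℚ)/(r*l₁ : ℕ) + ((p : ℕ) : ℚ)) * (r : ℚ)/(((r*k₁ : ℕ) : ℚ) + (r*l₁ : ℕ)))
    (((((r*k₁ : ℕ) : ℂ) + ((r*l₁ : ℕ) : ℂ)) * u - ((r*k₁ : ℕ) : ℂ) * (u+v))/((r : ℕ) : ℂ)) _ him4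
  have hnp2 := summable_norm_thterm
    (((b : ℚ) + c + ((r*k₁ : ℕ) : ℚ) * (p : ℕ))/(((r*k₁ : ℕ) : ℚ) + (r*l₁ : ℕ)))
    ((((r*k₁ : ℕ) : ℂ) + ((r*l₁ : ℕ) : ℂ)) * x + (u+v)) _ him3
  rw [tsum_mul_tsum_of_summable_norm hnp1 hnp2]
  apply tsum_congr
  rintro ⟨q, n'⟩
  simpa only [hedef, addEquiv, Equiv.coe_fn_mk] using
    key τ x u v r k₁ l₁ hr0 hk₁0 hl₁0 b c (p : ℕ) q n'
end

section
/- Let T be the set of triples of integers (b,c,p) modulo the equivalence relation generated by (b,c,p) ~ (b, c, p + (k+l)/r), (b,c,p) ~ (b+k, c, p-1), and (b,c,p) ~ (b, c+l, p+1), where k, l are positive integers with gcd r. Then the orbits of the ℤ-action on T generated by (b,c,p) ↦ (b+1, c-1, p) coincide exactly with the fibers of the well-defined map φ₃ : T → ℤ/(k+l)ℤ, (b,c,p) ↦ b + c + kp. -/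
/-- The generating relation on triples `(b,c,p) ∈ ℤ³`:
`(b,c,p) ~ (b,c,p+(k+l)/r)`, `(b,c,p) ~ (b+k,c,p-1)`, `(b,c,p) ~ (b,c+l,p+1)`. -/
def TRel (k l r : ℕ) (x y : ℤ × ℤ × ℤ) : Prop :=
  y = (x.1, x.2.1, x.2.2 + (((k + l) / r : ℕ) : ℤ)) ∨
  y = (x.1 + (k : ℤ), x.2.1, x.2.2 - 1) ∨
  y = (x.1, x.2.1 + (l : ℤ), x.2.2 + 1)

lemma shiftA (k l r : ℕ) (z : ℤ × ℤ × ℤ) :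
    ∀ n : ℤ, Relation.EqvGen (TRel k l r) z (z.1 + n * k, z.2.1, z.2.2 - n) := by
  intro n
  induction n using Int.induction_on with
  | zero => simpa using Relation.EqvGen.refl z
  | succ n ih =>
      refine ih.trans _ _ _ (Relation.EqvGen.rel _ _ ?_)
      right; left
      simp only [Prod.mk.injEq]
      refine ⟨by ring, trivial, by ring⟩
  | pred n ih =>
      refine ih.trans _ _ _ (Relation.EqvGen.symm _ _ (Relation.EqvGen.rel _ _ ?_))
      right; left
      simp only [Prod.mk.injEq]
      refine ⟨by ring, trivial, by ring⟩

lemma shiftB (k l r : ℕ) (z : ℤ × ℤ × ℤ) :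
    ∀ n : ℤ, Relation.EqvGen (TRel k l r) z (z.1, z.2.1 + n * l, z.2.2 + n) := by
  intro n
  induction n using Int.induction_on with
  | zero => simpa using Relation.EqvGen.refl z
  | succ n ih =>
      refine ih.trans _ _ _ (Relation.EqvGen.rel _ _ ?_)
      right; right
      simp only [Prod.mk.injEq]
      refine ⟨trivial, by ring, by ring⟩
  | pred n ih =>
      refine ih.trans _ _ _ (Relation.EqvGen.symm _ _ (Relation.EqvGen.rel _ _ ?_))
      right; right
      simp only [Prod.mk.injEq]
      refine ⟨trivial, by ring, by ring⟩

lemma shiftAB (k l r : ℕ) (z : ℤ × ℤ × ℤ) (a b : ℤ) :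
    Relation.EqvGen (TRel k l r) z (z.1 + a * k, z.2.1 + b * l, z.2.2 - a + b) :=
  (shiftA k l r z a).trans _ _ _ (shiftB k l r (z.1 + a * k, z.2.1, z.2.2 - a) b)

/-- On the quotient `T` of `ℤ³` by the equivalence relation generated by `TRel`,
the map `φ₃(b,c,p) = b + c + kp ∈ ℤ/(k+l)ℤ` is well defined, and its fibers coincide
with the orbits of the `ℤ`-action generated by `(b,c,p) ↦ (b+1, c-1, p)`. -/
theorem stmt_16 (k l : ℕ) (hk : 0 < k) (hl : 0 < l) (r : ℕ) (hr : r = Nat.gcd k l) :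
    (∀ x y : ℤ × ℤ × ℤ, Relation.EqvGen (TRel k l r) x y →
      ((x.1 + x.2.1 + (k : ℤ) * x.2.2 : ℤ) : ZMod (k + l)) =
        ((y.1 + y.2.1 + (k : ℤ) * y.2.2 : ℤ) : ZMod (k + l))) ∧
    (∀ x y : ℤ × ℤ × ℤ,
      (((x.1 + x.2.1 + (k : ℤ) * x.2.2 : ℤ) : ZMod (k + l)) =
        ((y.1 + y.2.1 + (k : ℤ) * y.2.2 : ℤ) : ZMod (k + l))) ↔
      ∃ j : ℤ, Relation.EqvGen (TRel k l r) x (y.1 + j, y.2.1 - j, y.2.2)) := by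
  have hrk : r ∣ k := hr ▸ Nat.gcd_dvd_left k l
  have hrl : r ∣ l := hr ▸ Nat.gcd_dvd_right k l
  obtain ⟨a, ha⟩ := hrk
  obtain ⟨b, hb⟩ := hrl
  have hr0 : 0 < r := hr ▸ Nat.gcd_pos_of_pos_left l hk
  have hkey : k * ((k + l) / r) = a * (k + l) := by
    subst ha hb
    rw [show r * a + r * b = r * (a + b) by ring, Nat.mul_div_cancel_left _ hr0]
    ring
  -- the first statement : φ₃ is invariant
  have part1 : ∀ x y : ℤ × ℤ × ℤ, Relation.EqvGen (TRel k l r) x y →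
      ((x.1 + x.2.1 + (k : ℤ) * x.2.2 : ℤ) : ZMod (k + l)) =
        ((y.1 + y.2.1 + (k : ℤ) * y.2.2 : ℤ) : ZMod (k + l)) := by
    intro x y h
    induction h with
    | rel u v huv =>
        rcases huv with h1 | h2 | h3
        · subst h1
          have e1 : (u.1 + u.2.1 + (k : ℤ) * (u.2.2 + (((k + l) / r : ℕ) : ℤ))) =
              (u.1 + u.2.1 + (k : ℤ) * u.2.2) + ((k * ((k + l) / r) : ℕ) : ℤ) := by
            rw [Nat.cast_mul]; ring
          have hkl : ((k : ZMod (k + l)) + (l : ZMod (k + l))) = 0 := by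
            rw [← Nat.cast_add, ZMod.natCast_self]
          rw [e1, hkey]
          push_cast
          linear_combination -(a : ZMod (k + l)) * hkl
        · subst h2
          push_cast
          ring
        · subst h3
          have hkl : ((k : ZMod (k + l)) + (l : ZMod (k + l))) = 0 := by
            rw [← Nat.cast_add, ZMod.natCast_self]
          push_cast
          linear_combination -hkl
    | refl u => rfl
    | symm u v _ ih => exact ih.symm
    | trans u v w _ _ ih1 ih2 => exact ih1.trans ih2
  refine ⟨part1, ?_⟩
  intro x y
  constructor
  · intro h
    -- extract divisibility
    have h0 : (((x.1 + x.2.1 + (k : ℤ) * x.2.2) - (y.1 + y.2.1 + (k : ℤ) * y.2.2) : ℤ) :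
        ZMod (k + l)) = 0 := by
      push_cast at h ⊢
      rw [sub_eq_zero]
      exact h
    rw [ZMod.intCast_zmod_eq_zero_iff_dvd] at h0
    obtain ⟨m, hm⟩ := h0
    push_cast at hm
    set a2 : ℤ := m - (x.2.2 - y.2.2) with ha2
    set j : ℤ := (x.1 - y.1) - a2 * k with hj
    refine ⟨j, ?_⟩
    have hsh := shiftAB k l r (y.1 + j, y.2.1 - j, y.2.2) a2 m
    have hx : ((y.1 + j) + a2 * k, (y.2.1 - j) + m * l, y.2.2 - a2 + m) = x := by
      simp only [Prod.ext_iff]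
      refine ⟨by rw [hj]; ring, ?_, by rw [ha2]; ring⟩
      have : x.2.1 = y.2.1 - j + m * (l : ℤ) := by
        rw [hj, ha2]; linarith [hm]
      linarith [this]
    rw [hx] at hsh
    exact Relation.EqvGen.symm _ _ hsh
  · intro ⟨j, hj⟩
    have := part1 x (y.1 + j, y.2.1 - j, y.2.2) hj
    rw [this]
    push_cast
    ring
end
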